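/- arXiv:1303.4145 — 2 statements merged into one kernel-verified Lean document; each statement's English description precedes it below -/
import Mathlib

section
/- Let N ≥ 2, θ, l ∈ ℝ, p > 1 and R > 0. A solution v of (E) on B_R \ {0} is stable if and only if the function z defined by z(y) = v(x), y = x/|x|², is a stable solution of −div(|y|^{θ̃} ∇z) = |y|^{l̃} |z|^{p−1} z on ℝ^N \ closure(B_{1/R}), where θ̃ = 4 − 2N − θ and l̃ = −2N − l. -/
open MeasureTheory Set Filter Metric

noncomputable section

abbrev Euc (N : ℕ) : Type := EuclideanSpace ℝ (Fin N)

def MemH1w {N : ℕ} (θ : ℝ) (Ω : Set (Euc N)) (φ : Euc N → ℝ) : Prop :=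
  IntegrableOn (fun x => ‖x‖ ^ θ * (φ x) ^ 2) Ω volume ∧
  IntegrableOn (fun x => ‖x‖ ^ θ * ‖gradient φ x‖ ^ 2) Ω volume

def MemH1wLoc {N : ℕ} (θ : ℝ) (Ω : Set (Euc N)) (φ : Euc N → ℝ) : Prop :=
  ∀ K : Set (Euc N), K ⊆ Ω → IsCompact K → MemH1w θ K φ

def MemLinftyLoc {N : ℕ} (Ω : Set (Euc N)) (φ : Euc N → ℝ) : Prop :=
  ∀ K : Set (Euc N), K ⊆ Ω → IsCompact K → ∃ C : ℝ, ∀ x ∈ K, |φ x| ≤ C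

def MemH1wc {N : ℕ} (θ : ℝ) (Ω : Set (Euc N)) (φ : Euc N → ℝ) : Prop :=
  MemH1w θ Ω φ ∧ HasCompactSupport φ ∧ tsupport φ ⊆ Ω

def IsSolutionE {N : ℕ} (θ l p : ℝ) (Ω : Set (Euc N)) (v : Euc N → ℝ) : Prop :=
  MemH1wLoc θ Ω v ∧ MemLinftyLoc Ω v ∧
  ∀ φ : Euc N → ℝ, MemH1wc θ Ω φ → MemLinftyLoc Ω φ →
    ∫ x in Ω, (‖x‖ ^ θ * (inner ℝ (gradient v x) (gradient φ x) : ℝ)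
      - ‖x‖ ^ l * |v x| ^ (p - 1) * v x * φ x) = 0

def Qform {N : ℕ} (θ l p : ℝ) (Ω : Set (Euc N)) (v ψ : Euc N → ℝ) : ℝ :=
  ∫ x in Ω, (‖x‖ ^ θ * ‖gradient ψ x‖ ^ 2 - p * ‖x‖ ^ l * |v x| ^ (p - 1) * (ψ x) ^ 2)

def IsStableE {N : ℕ} (θ l p : ℝ) (Ω : Set (Euc N)) (v : Euc N → ℝ) : Prop :=
  ∀ ψ : Euc N → ℝ, MemH1wc θ Ω ψ → MemLinftyLoc Ω ψ → 0 ≤ Qform θ l p Ω v ψ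

def HasFiniteMorseIndex {N : ℕ} (θ l p : ℝ) (Ω : Set (Euc N)) (v : Euc N → ℝ) : Prop :=
  ∃ k : ℕ, ∀ X : Submodule ℝ (Euc N → ℝ),
    (∀ ψ ∈ X, MemH1wc θ Ω ψ ∧ MemLinftyLoc Ω ψ ∧ (ψ ≠ 0 → Qform θ l p Ω v ψ < 0)) →
    FiniteDimensional ℝ ↥X ∧ Module.finrank ℝ ↥X ≤ k

def Pplus (N' τ : ℝ) : ℝ :=
  ((N' - 2) ^ 2 - 2 * (2 + τ) * (N' + τ)
      + 2 * (2 + τ) * Real.sqrt ((2 + τ) * (2 * N' + τ - 2)))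
    / ((N' - 2) * (N' - 4 * τ - 10))

def Pminus (N' τ : ℝ) : ℝ :=
  if N' = 4 * τ + 10 then 4 / 3 else
    ((N' - 2) ^ 2 - 2 * (2 + τ) * (N' + τ)
        - 2 * (2 + τ) * Real.sqrt ((2 + τ) * (2 * N' + τ - 2)))
      / ((N' - 2) * (N' - 4 * τ - 10))

def pc (N' τ : ℝ) : EReal :=
  if N' ≤ 10 + 4 * τ then ⊤ else ((Pplus N' τ : ℝ) : EReal)

def lap {N : ℕ} (f : Euc N → ℝ) (x : Euc N) : ℝ :=
  ∑ i : Fin N,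
    fderiv ℝ (fun y => fderiv ℝ f y (EuclideanSpace.single i (1 : ℝ))) x
      (EuclideanSpace.single i (1 : ℝ))

def diverg {N : ℕ} (F : Euc N → Euc N) (x : Euc N) : ℝ :=
  ∑ i : Fin N, fderiv ℝ (fun y => F y i) x (EuclideanSpace.single i (1 : ℝ))

def invPt {N : ℕ} (y : Euc N) : Euc N := (‖y‖ ^ 2)⁻¹ • y

/-!
The inversion `y ↦ y/|y|²` is an involution of `ℝᴺ \ {0}` whose derivative at `y` is `|y|⁻²`
times the reflection in `y^⊥`. Hence its Jacobian is `|y|^{-2N}` and it scales gradients by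
`|y|⁻²`, so substituting `x = y/|y|²` in `Q_v(ψ ∘ inv)` gives exactly `Q_z(ψ)` with the weights
`θ̃ = 4 - 2N - θ` and `l̃ = -2N - l`. Precomposition with the inversion maps admissible test
functions to admissible ones: their supports are compact and avoid `0`, so every power weight is
bounded above and below on them and the weight of the `L²` term may be changed freely.
-/

lemma norm_gradient_eq_norm_fderiv {F : Type*} [NormedAddCommGroup F] [InnerProductSpace ℝ F]
    [CompleteSpace F] (f : F → ℝ) (x : F) : ‖gradient f x‖ = ‖fderiv ℝ f x‖ :=
  (InnerProductSpace.toDual ℝ F).symm.norm_map _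

lemma integrableOn_norm_rpow_mul_of_compact {E : Type*} [NormedAddCommGroup E] [MeasurableSpace E]
    [OpensMeasurableSpace E] {μ : Measure E} {Ω K : Set E} {f : E → ℝ} {a : ℝ}
    (hK : IsCompact K) (h0 : (0 : E) ∉ K) (hf : ∀ y ∉ K, f y = 0)
    (h : IntegrableOn (fun y => ‖y‖ ^ a * f y) Ω μ) (b : ℝ) :
    IntegrableOn (fun y => ‖y‖ ^ b * f y) Ω μ := by
  have hcont : ContinuousOn (fun y : E => ‖y‖ ^ (b - a)) K :=
    continuous_norm.continuousOn.rpow_const fun y hy =>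
      Or.inl (norm_ne_zero_iff.2 (ne_of_mem_of_not_mem hy h0))
  obtain ⟨C, hC⟩ := hK.exists_bound_of_continuousOn hcont
  have heq : (fun y => ‖y‖ ^ b * f y)
      = fun y => K.indicator (fun y => ‖y‖ ^ (b - a)) y * (‖y‖ ^ a * f y) := by
    funext y
    by_cases hy : y ∈ K
    · rw [indicator_of_mem hy, ← mul_assoc,
        ← Real.rpow_add (norm_pos_iff.2 (ne_of_mem_of_not_mem hy h0)), sub_add_cancel]
    · simp [hf y hy]
  rw [heq]
  refine h.bdd_mul (c := max C 0)
    (((measurable_norm.pow_const _).indicator hK.isClosed.measurableSet).aestronglyMeasurable)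
    (ae_of_all _ fun y => ?_)
  by_cases hy : y ∈ K
  · rw [indicator_of_mem hy]
    exact (hC y hy).trans (le_max_left _ _)
  · simp [hy]

section Inversion

variable {N : ℕ}

lemma norm_invPt (y : Euc N) : ‖invPt y‖ = ‖y‖⁻¹ := by
  rcases eq_or_ne y 0 with rfl | hy
  · simp [invPt]
  · rw [invPt, norm_smul, norm_inv, norm_pow, norm_norm]
    field_simp [norm_ne_zero_iff.2 hy]

lemma invPt_invPt (y : Euc N) : invPt (invPt y) = y := by
  rcases eq_or_ne y 0 with rfl | hy
  · simp [invPt]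
  · rw [invPt, norm_invPt, invPt, smul_smul, inv_pow, inv_inv, mul_inv_cancel₀ (by positivity),
      one_smul]

lemma invPt_involutive : Function.Involutive (invPt (N := N)) := invPt_invPt

lemma invPt_eq_zero {y : Euc N} : invPt y = 0 ↔ y = 0 := by
  rw [← norm_eq_zero, norm_invPt, inv_eq_zero, norm_eq_zero]

lemma invPt_zero : invPt (0 : Euc N) = 0 := invPt_eq_zero.2 rfl

lemma image_invPt (S : Set (Euc N)) : invPt '' S = invPt ⁻¹' S :=
  congrFun invPt_involutive.image_eq_preimage_symm S

lemma image_image_invPt (S : Set (Euc N)) : invPt '' (invPt '' S) = S := by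
  simp [image_image, invPt_invPt]

lemma measurable_invPt : Measurable (invPt (N := N)) :=
  ((measurable_norm.pow_const 2).inv).smul measurable_id

def fderivInvPt (y : Euc N) : Euc N →L[ℝ] Euc N :=
  (‖y‖ ^ 2)⁻¹ • ((ℝ ∙ y)ᗮ.reflection : Euc N →L[ℝ] Euc N)

lemma hasFDerivAt_invPt {y : Euc N} (hy : y ≠ 0) : HasFDerivAt invPt (fderivInvPt y) y := by
  have hn : ‖y‖ ^ 2 ≠ 0 := by positivity
  have h := ((hasDerivAt_inv hn).comp_hasFDerivAt y
    (hasStrictFDerivAt_norm_sq y).hasFDerivAt).smul (hasFDerivAt_id y)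
  refine h.congr_fderiv (ContinuousLinearMap.ext fun h => ?_)
  simp only [Function.comp_apply, neg_smul, id_eq, add_apply, smul_apply,
    ContinuousLinearMap.id_apply, ContinuousLinearMap.smulRight_apply, neg_apply,
    coe_innerSL_apply, nsmul_eq_mul, Nat.cast_ofNat, smul_eq_mul, fderivInvPt,
    ContinuousLinearEquiv.coe_coe, LinearIsometryEquiv.coe_toContinuousLinearEquiv,
    Submodule.reflection_orthogonal_apply, Submodule.reflection_singleton_apply,
    Real.ringHom_apply, neg_sub]
  match_scalars <;> field_simp

lemma abs_det_fderivInvPt (y : Euc N) : |(fderivInvPt y).det| = ‖y‖ ^ (-2 * (N : ℝ)) := by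
  rw [fderivInvPt, ContinuousLinearMap.det]
  have hR : |LinearMap.det ((ℝ ∙ y)ᗮ.reflection : Euc N →L[ℝ] Euc N).toLinearMap| = 1 :=
    ((ℝ ∙ y)ᗮ.det_reflection).symm ▸ abs_neg_one_pow _
  rw [ContinuousLinearMap.toLinearMap_smul, LinearMap.det_smul, abs_mul, hR,
    finrank_euclideanSpace_fin, abs_of_nonneg (by positivity), mul_one, ← inv_pow, ← pow_mul,
    ← Real.rpow_natCast, ← Real.rpow_neg_one, ← Real.rpow_mul (norm_nonneg _)]
  push_cast
  ring_nf

lemma differentiableAt_invPt {y : Euc N} (hy : y ≠ 0) : DifferentiableAt ℝ invPt y :=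
  (hasFDerivAt_invPt hy).differentiableAt

lemma differentiableAt_comp_invPt_iff {ψ : Euc N → ℝ} {y : Euc N} (hy : y ≠ 0) :
    DifferentiableAt ℝ (ψ ∘ invPt) y ↔ DifferentiableAt ℝ ψ (invPt y) := by
  refine ⟨fun h => ?_, fun h => h.comp y (differentiableAt_invPt hy)⟩
  rw [← invPt_invPt y] at h
  have h' := h.comp (invPt y) (differentiableAt_invPt (invPt_eq_zero.not.2 hy))
  rwa [Function.comp_assoc, invPt_involutive.comp_self, Function.comp_id] at h'

-- Also for non-differentiable `ψ`: differentiability transfers, so both gradients are then `0`.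
lemma norm_gradient_comp_invPt (ψ : Euc N → ℝ) {y : Euc N} (hy : y ≠ 0) :
    ‖gradient (ψ ∘ invPt) y‖ = (‖y‖ ^ 2)⁻¹ * ‖gradient ψ (invPt y)‖ := by
  rw [norm_gradient_eq_norm_fderiv, norm_gradient_eq_norm_fderiv]
  by_cases hψ : DifferentiableAt ℝ ψ (invPt y)
  · rw [fderiv_comp y hψ (differentiableAt_invPt hy), (hasFDerivAt_invPt hy).fderiv, fderivInvPt,
      ContinuousLinearMap.comp_smul, norm_smul, norm_inv, norm_pow, norm_norm]
    rw [ContinuousLinearMap.opNorm_comp_linearIsometryEquiv]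
  · rw [fderiv_zero_of_not_differentiableAt hψ,
      fderiv_zero_of_not_differentiableAt ((differentiableAt_comp_invPt_iff hy).not.2 hψ)]
    simp

lemma integral_image_invPt {Ω : Set (Euc N)} (hΩ : MeasurableSet Ω) (h0 : (0 : Euc N) ∉ Ω)
    (g : Euc N → ℝ) :
    ∫ x in invPt '' Ω, g x = ∫ y in Ω, ‖y‖ ^ (-2 * (N : ℝ)) * g (invPt y) := by
  rw [integral_image_eq_integral_abs_det_fderiv_smul volume hΩ
    (fun y hy => (hasFDerivAt_invPt (ne_of_mem_of_not_mem hy h0)).hasFDerivWithinAt)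
    invPt_involutive.injective.injOn g]
  simp only [abs_det_fderivInvPt, smul_eq_mul]

lemma integrableOn_image_invPt_iff {Ω : Set (Euc N)} (hΩ : MeasurableSet Ω)
    (h0 : (0 : Euc N) ∉ Ω) (g : Euc N → ℝ) :
    IntegrableOn g (invPt '' Ω) ↔
      IntegrableOn (fun y => ‖y‖ ^ (-2 * (N : ℝ)) * g (invPt y)) Ω := by
  rw [integrableOn_image_iff_integrableOn_abs_det_fderiv_smul volume hΩ
    (fun y hy => (hasFDerivAt_invPt (ne_of_mem_of_not_mem hy h0)).hasFDerivWithinAt)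
    invPt_involutive.injective.injOn g]
  simp only [abs_det_fderivInvPt, smul_eq_mul]

lemma norm_rpow_mul_norm_invPt_rpow {y : Euc N} (hy : y ≠ 0) (a b : ℝ) :
    ‖y‖ ^ a * ‖invPt y‖ ^ b = ‖y‖ ^ (a - b) := by
  rw [norm_invPt, Real.inv_rpow (norm_nonneg _), ← Real.rpow_neg (norm_nonneg _),
    ← Real.rpow_add (norm_pos_iff.2 hy), sub_eq_add_neg]

lemma weighted_norm_gradient_comp_invPt (ψ : Euc N → ℝ) {y : Euc N} (hy : y ≠ 0) (θ : ℝ) :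
    ‖y‖ ^ (-2 * (N : ℝ)) * (‖invPt y‖ ^ θ * ‖gradient (ψ ∘ invPt) (invPt y)‖ ^ 2)
      = ‖y‖ ^ (4 - 2 * (N : ℝ) - θ) * ‖gradient ψ y‖ ^ 2 := by
  have hpos : 0 < ‖y‖ := norm_pos_iff.2 hy
  rw [norm_gradient_comp_invPt ψ (invPt_eq_zero.not.2 hy), invPt_invPt, norm_invPt,
    Real.inv_rpow hpos.le, ← Real.rpow_neg hpos.le, inv_pow, inv_inv,
    show 4 - 2 * (N : ℝ) - θ = -2 * N + -θ + (2 * 2 : ℕ) by push_cast; ring,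
    Real.rpow_add hpos, Real.rpow_add hpos, Real.rpow_natCast, pow_mul]
  ring

lemma Qform_comp_invPt {Ω : Set (Euc N)} (hΩ : MeasurableSet Ω) (h0 : (0 : Euc N) ∉ Ω)
    (θ l p : ℝ) (v ψ : Euc N → ℝ) :
    Qform θ l p (invPt '' Ω) v (ψ ∘ invPt)
      = Qform (4 - 2 * (N : ℝ) - θ) (-2 * (N : ℝ) - l) p Ω (v ∘ invPt) ψ := by
  rw [Qform, Qform, integral_image_invPt hΩ h0]
  refine setIntegral_congr_fun hΩ fun y hy => ?_
  have hy0 : y ≠ 0 := ne_of_mem_of_not_mem hy h0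
  rw [Function.comp_apply, invPt_invPt, mul_sub, weighted_norm_gradient_comp_invPt ψ hy0,
    ← norm_rpow_mul_norm_invPt_rpow hy0 _ l, Function.comp_apply]
  ring

lemma zero_notMem_image_invPt {S : Set (Euc N)} (h0 : (0 : Euc N) ∉ S) :
    (0 : Euc N) ∉ invPt '' S := by
  rwa [image_invPt, mem_preimage, invPt_zero]

lemma isCompact_image_invPt {K : Set (Euc N)} (hK : IsCompact K) (h0 : (0 : Euc N) ∉ K) :
    IsCompact (invPt '' K) :=
  hK.image_of_continuousOn fun _ hy =>
    (differentiableAt_invPt (ne_of_mem_of_not_mem hy h0)).continuousAt.continuousWithinAt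

lemma tsupport_comp_invPt_subset {ψ : Euc N → ℝ} (hK : IsCompact (tsupport ψ))
    (h0 : (0 : Euc N) ∉ tsupport ψ) : tsupport (ψ ∘ invPt) ⊆ invPt '' tsupport ψ :=
  closure_minimal (fun w hw => ⟨invPt w, subset_tsupport _ hw, invPt_invPt w⟩)
    (isCompact_image_invPt hK h0).isClosed

lemma MemLinftyLoc.comp_invPt {Ω : Set (Euc N)} (h0 : (0 : Euc N) ∉ Ω) {ψ : Euc N → ℝ}
    (h : MemLinftyLoc Ω ψ) : MemLinftyLoc (invPt '' Ω) (ψ ∘ invPt) := by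
  intro K hK hKc
  have hK0 : (0 : Euc N) ∉ K := fun hK0 => zero_notMem_image_invPt h0 (hK hK0)
  obtain ⟨C, hC⟩ := h (invPt '' K) (image_subset_iff.2 (image_invPt Ω ▸ hK))
    (isCompact_image_invPt hKc hK0)
  exact ⟨C, fun x hx => hC (invPt x) (mem_image_of_mem _ hx)⟩

lemma MemH1w.comp_invPt {Ω : Set (Euc N)} (hΩ : MeasurableSet Ω) (h0 : (0 : Euc N) ∉ Ω)
    {θ : ℝ} {ψ : Euc N → ℝ} (hK : IsCompact (tsupport ψ))
    (hψ0 : (0 : Euc N) ∉ tsupport ψ)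
    (h : MemH1w (4 - 2 * (N : ℝ) - θ) Ω ψ) : MemH1w θ (invPt '' Ω) (ψ ∘ invPt) := by
  obtain ⟨hL2, hgrad⟩ := h
  constructor <;> rw [integrableOn_image_invPt_iff hΩ h0]
  · refine (integrableOn_norm_rpow_mul_of_compact hK hψ0
      (fun y hy => by rw [image_eq_zero_of_notMem_tsupport hy, sq, zero_mul]) hL2
      (-2 * N - θ)).congr_fun (fun y hy => ?_) hΩ
    rw [Function.comp_apply, invPt_invPt, ← mul_assoc,
      norm_rpow_mul_norm_invPt_rpow (ne_of_mem_of_not_mem hy h0)]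
  · exact hgrad.congr_fun
      (fun y hy => (weighted_norm_gradient_comp_invPt ψ (ne_of_mem_of_not_mem hy h0) θ).symm) hΩ

lemma MemH1wc.comp_invPt {Ω : Set (Euc N)} (hΩ : MeasurableSet Ω) (h0 : (0 : Euc N) ∉ Ω)
    {θ : ℝ} {ψ : Euc N → ℝ} (h : MemH1wc (4 - 2 * (N : ℝ) - θ) Ω ψ) :
    MemH1wc θ (invPt '' Ω) (ψ ∘ invPt) := by
  obtain ⟨hH1, hK, hsupp⟩ := h
  have hψ0 : (0 : Euc N) ∉ tsupport ψ := fun hψ0 => h0 (hsupp hψ0)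
  have hsub := tsupport_comp_invPt_subset hK hψ0
  exact ⟨hH1.comp_invPt hΩ h0 hK hψ0,
    (isCompact_image_invPt hK hψ0).of_isClosed_subset (isClosed_tsupport _) hsub,
    hsub.trans (image_mono hsupp)⟩

lemma IsStableE.comp_invPt {Ω : Set (Euc N)} (hΩ : MeasurableSet Ω) (h0 : (0 : Euc N) ∉ Ω)
    {θ l p : ℝ} {v : Euc N → ℝ} (h : IsStableE θ l p (invPt '' Ω) v) :
    IsStableE (4 - 2 * (N : ℝ) - θ) (-2 * (N : ℝ) - l) p Ω (v ∘ invPt) := fun ψ hψ hψ' =>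
  Qform_comp_invPt hΩ h0 θ l p v ψ ▸
    h (ψ ∘ invPt) (hψ.comp_invPt hΩ h0) (hψ'.comp_invPt h0)

lemma isStableE_comp_invPt_iff {Ω : Set (Euc N)} (hΩ : MeasurableSet Ω) (h0 : (0 : Euc N) ∉ Ω)
    {θ l p : ℝ} {v : Euc N → ℝ} :
    IsStableE (4 - 2 * (N : ℝ) - θ) (-2 * (N : ℝ) - l) p Ω (v ∘ invPt)
      ↔ IsStableE θ l p (invPt '' Ω) v := by
  refine ⟨fun h => ?_, IsStableE.comp_invPt hΩ h0⟩
  have hΩ' : MeasurableSet (invPt '' Ω) := image_invPt Ω ▸ measurable_invPt hΩ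
  rw [← image_image_invPt Ω] at h
  have h' := h.comp_invPt hΩ' (zero_notMem_image_invPt h0)
  rwa [sub_sub_cancel, sub_sub_cancel, Function.comp_assoc, invPt_involutive.comp_self,
    Function.comp_id] at h'

lemma image_invPt_compl_closedBall {R : ℝ} (hR : 0 < R) :
    invPt '' (closedBall (0 : Euc N) R⁻¹)ᶜ = ball 0 R \ {0} := by
  ext x
  rw [image_invPt, mem_preimage, mem_compl_iff, mem_closedBall_zero_iff, norm_invPt, not_le,
    Set.mem_sdiff, mem_ball_zero_iff, mem_singleton_iff]
  rcases eq_or_ne x 0 with rfl | hx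
  · simp [hR.le]
  · rw [inv_lt_inv₀ hR (norm_pos_iff.2 hx)]
    simp [hx]

end Inversion

theorem stmt_3_general {N : ℕ} (θ l p R : ℝ) (hR : 0 < R)
    (v : Euc N → ℝ)
    (θt lt : ℝ) (hθt : θt = 4 - 2 * (N : ℝ) - θ) (hlt : lt = -2 * (N : ℝ) - l)
    (z : Euc N → ℝ) (hz : ∀ y : Euc N, z y = v (invPt y)) :
    IsStableE θ l p (ball (0 : Euc N) R \ {0}) v ↔
      IsStableE θt lt p ((closure (ball (0 : Euc N) (1 / R)))ᶜ) z := by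
  obtain rfl : z = v ∘ invPt := funext hz
  subst hθt hlt
  rw [closure_ball _ (one_div_pos.2 hR).ne', one_div,
    isStableE_comp_invPt_iff measurableSet_closedBall.compl
      (not_not_intro (mem_closedBall_self (inv_nonneg.2 hR.le))),
    image_invPt_compl_closedBall hR]

/-- Proposition 1.8, the inversion `z(y) = v(x)`, `y = x/|x|²`,
preserves stability. A solution `v` of `-div(|x|^θ ∇v) = |x|^l |v|^{p-1} v` on
`B_R \ {0}` is stable iff `z` is a stable solution of
`-div(|y|^θ̃ ∇z) = |y|^l̃ |z|^{p-1} z` on `ℝ^N \ closure(B_{1/R})`, where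
`θ̃ = 4 - 2N - θ`, `l̃ = -2N - l`. -/
theorem stmt_3 {N : ℕ} (hN : 2 ≤ N) (θ l p R : ℝ) (hp : 1 < p) (hR : 0 < R)
    (v : Euc N → ℝ)
    (hv : IsSolutionE θ l p (ball (0 : Euc N) R \ {0}) v)
    (θt lt : ℝ) (hθt : θt = 4 - 2 * (N : ℝ) - θ) (hlt : lt = -2 * (N : ℝ) - l)
    (z : Euc N → ℝ) (hz : ∀ y : Euc N, z y = v (invPt y)) :
    IsStableE θ l p (ball (0 : Euc N) R \ {0}) v ↔
      IsStableE θt lt p ((closure (ball (0 : Euc N) (1 / R)))ᶜ) z :=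
  stmt_3_general θ l p R hR v θt lt hθt hlt z hz

end
end

section
/- Let N ≥ 2, θ, l ∈ ℝ with N' = N + θ > 2 and τ = l − θ > −2, and suppose p ≥ p_c(N',τ) (so in particular N' > 10 + 4τ and p > (N'+2+2τ)/(N'−2)). For κ > 0 let v_κ be the unique positive solution of (r^{N−1+θ} v')' + r^{N−1+l} v^p = 0 for r > 0 with v(0) = κ and lim_{r→0+} r^{N−1+θ} v'(r) = 0. Then v_κ(r) < C_0 r^{−(2+τ)/(p−1)} for all r > 0 and all κ > 0, where C_0 = [((2+τ)/(p−1))(N'−2−(2+τ)/(p−1))]^{1/(p−1)}. -/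
open MeasureTheory Set Filter Metric

noncomputable section

/-- `v : [0,∞) → ℝ` is a positive radial solution of the initial value problem
`(r^{N-1+θ} v')' + r^{N-1+l} v^p = 0` for `r > 0`, `v(0) = κ`,
`lim_{r→0+} r^{N-1+θ} v'(r) = 0`. -/
def IsRadSol (N : ℕ) (θ l p κ : ℝ) (v : ℝ → ℝ) : Prop :=
  ContinuousOn v (Set.Ici 0) ∧ v 0 = κ ∧ (∀ r ∈ Set.Ioi (0 : ℝ), 0 < v r) ∧
  ∃ v' : ℝ → ℝ,
    (∀ r ∈ Set.Ioi (0 : ℝ), HasDerivAt v (v' r) r) ∧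
    (∀ r ∈ Set.Ioi (0 : ℝ),
      HasDerivAt (fun s : ℝ => s ^ ((N : ℝ) - 1 + θ) * v' s)
        (-(r ^ ((N : ℝ) - 1 + l) * v r ^ p)) r) ∧
    Filter.Tendsto (fun r : ℝ => r ^ ((N : ℝ) - 1 + θ) * v' r)
      (nhdsWithin 0 (Set.Ioi 0)) (nhds 0)

/-!
With `α = (2 + τ)/(p - 1)`, the Emden–Fowler variable `x(t) = e^{αt} v(e^t)` solves the autonomous
equation `x'' + β x' - A x + x^p = 0` with `β = N' - 2 - 2α`, `A = α (N' - 2 - α)`, whose positive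
equilibrium is `C₀ = A^{1/(p-1)}`; the claim is `x < C₀`. The condition `p ≥ P₊(N', τ)` says
exactly that the linearisation at `C₀` has real characteristic roots, `β² ≥ 4 (p - 1) A`, so
`β = γ + δ` and `γ δ = (p - 1) A` with `γ, δ > 0`. By convexity of `y ↦ y^p` the function
`Ψ = e^{δt} (x' + γ (x - C₀))` is nonincreasing; since the flux `r^{N'-1} v'` decreases from `0`,
`v' ≤ 0`, and with `x → 0` this bounds `Ψ` above by a function tending to `0` at `-∞`, so `Ψ ≤ 0`.
Hence `e^{γt} (x - C₀)` is nonincreasing, and being negative near `-∞` it is negative everywhere.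
-/

open Real Topology

lemma pc_le_coe_iff {N' τ p : ℝ} : pc N' τ ≤ (p : EReal) ↔ 10 + 4 * τ < N' ∧ Pplus N' τ ≤ p := by
  unfold pc
  split_ifs with h
  · simp [h]
  · simp [not_le.1 h]

lemma Antitone.ge_of_eventually_le_of_tendsto {α β : Type*} [SemilatticeInf α] [Nonempty α]
    [Preorder β] [TopologicalSpace β] [OrderClosedTopology β] {f g : α → β} {b : β}
    (hf : Antitone f) (hfg : ∀ᶠ s in atBot, f s ≤ g s) (hg : Tendsto g atBot (𝓝 b)) (t : α) :
    f t ≤ b :=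
  _root_.ge_of_tendsto hg <| (hfg.and (eventually_le_atBot t)).mono fun _ hs => (hf hs.2).trans hs.1

lemma Antitone.lt_of_eventually_lt_atBot {α β : Type*} [SemilatticeInf α] [Nonempty α]
    [Preorder β] {f : α → β} {b : β} (hf : Antitone f) (h : ∀ᶠ s in atBot, f s < b) (t : α) :
    f t < b := by
  obtain ⟨s, hs⟩ := eventually_atBot.1 h
  exact (hf inf_le_left).trans_lt (hs _ inf_le_right)

lemma AntitoneOn.ge_of_tendsto_nhdsGT {f : ℝ → ℝ} {a b r : ℝ} (hf : AntitoneOn f (Ioi a))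
    (h : Tendsto f (𝓝[>] a) (𝓝 b)) (hr : a < r) : f r ≤ b :=
  _root_.ge_of_tendsto h <| by
    filter_upwards [Ioo_mem_nhdsGT hr] with s hs using hf hs.1 hr hs.2.le

lemma rpow_sub_one_mul_le_rpow {C y p : ℝ} (hC : 0 < C) (hy : 0 ≤ y) (hp : 1 ≤ p) :
    C ^ (p - 1) * (p * y - (p - 1) * C) ≤ y ^ p := by
  have h := one_add_mul_self_le_rpow_one_add (s := y / C - 1) (by linarith [div_nonneg hy hC.le]) hp
  rw [add_sub_cancel, div_rpow hy hC.le, le_div_iff₀ (by positivity)] at h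
  calc C ^ (p - 1) * (p * y - (p - 1) * C) = (1 + p * (y / C - 1)) * C ^ p := by
        rw [rpow_sub_one hC.ne']; field_simp; ring
    _ ≤ y ^ p := h

lemma exists_pos_add_eq_mul_eq {b c : ℝ} (hb : 0 < b) (hc : 0 < c) (h : 4 * c ≤ b ^ 2) :
    ∃ γ δ : ℝ, 0 < γ ∧ 0 < δ ∧ γ + δ = b ∧ γ * δ = c := by
  have hs := sq_sqrt (sub_nonneg.2 h)
  have hs0 := sqrt_nonneg (b ^ 2 - 4 * c)
  have hsb : √(b ^ 2 - 4 * c) < b := by nlinarith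
  exact ⟨(b + √(b ^ 2 - 4 * c)) / 2, (b - √(b ^ 2 - 4 * c)) / 2, by linarith, by linarith,
    by ring, by nlinarith⟩

section Pplus

variable {N' τ p : ℝ}

lemma sq_sqrt_Pplus_discrim (hτ : -2 < τ) (hN' : 10 + 4 * τ < N') :
    √((2 + τ) * (2 * N' + τ - 2)) ^ 2 = (N' - 4 - τ) ^ 2 - (N' - 2) * (N' - 10 - 4 * τ) := by
  rw [sq_sqrt (by nlinarith)]
  ring

-- `Pplus N' τ - 1` is the larger root of the quadratic in `quadratic_nonneg_of_Pplus_le`.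
lemma le_mul_sub_one_of_Pplus_le (hτ : -2 < τ) (hN' : 10 + 4 * τ < N') (hp : Pplus N' τ ≤ p) :
    2 * (2 + τ) * (N' - 4 - τ + √((2 + τ) * (2 * N' + τ - 2)))
      ≤ (N' - 2) * (N' - 10 - 4 * τ) * (p - 1) := by
  rw [Pplus, div_le_iff₀ (by nlinarith)] at hp
  linarith

lemma one_lt_of_Pplus_le (hτ : -2 < τ) (hN' : 10 + 4 * τ < N') (hp : Pplus N' τ ≤ p) : 1 < p := by
  have h := le_mul_sub_one_of_Pplus_le hτ hN' hp
  have hs := sqrt_nonneg ((2 + τ) * (2 * N' + τ - 2))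
  by_contra! hp1
  nlinarith [mul_pos (by linarith : (0 : ℝ) < N' - 2) (by linarith : (0 : ℝ) < N' - 10 - 4 * τ)]

lemma two_mul_lt_mul_sub_one_of_Pplus_le (hτ : -2 < τ) (hN' : 10 + 4 * τ < N')
    (hp : Pplus N' τ ≤ p) : 2 * (2 + τ) < (N' - 2) * (p - 1) := by
  have h := le_mul_sub_one_of_Pplus_le hτ hN' hp
  have hs := sqrt_nonneg ((2 + τ) * (2 * N' + τ - 2))
  have h10 : 0 < N' - 10 - 4 * τ := by linarith
  refine lt_of_mul_lt_mul_right ?_ h10.le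
  nlinarith

lemma quadratic_nonneg_of_Pplus_le (hτ : -2 < τ) (hN' : 10 + 4 * τ < N') (hp : Pplus N' τ ≤ p) :
    0 ≤ (N' - 2) * (N' - 10 - 4 * τ) * (p - 1) ^ 2 - 4 * (2 + τ) * (N' - 4 - τ) * (p - 1)
      + 4 * (2 + τ) ^ 2 := by
  set a := (N' - 2) * (N' - 10 - 4 * τ)
  set s := √((2 + τ) * (2 * N' + τ - 2))
  have ha : 0 < a := mul_pos (by linarith) (by linarith)
  have hs : 0 ≤ s := sqrt_nonneg _
  have hs2 := sq_sqrt_Pplus_discrim hτ hN'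
  have h := le_mul_sub_one_of_Pplus_le hτ hN' hp
  -- `a · Q(p - 1) = (a (p - 1) - 2 (2 + τ) (N' - 4 - τ))² - (2 (2 + τ) s)²`
  refine nonneg_of_mul_nonneg_right ?_ ha
  have hroot : 0 ≤ a * (p - 1) - 2 * (2 + τ) * (N' - 4 - τ) - 2 * (2 + τ) * s := by nlinarith
  nlinarith [mul_nonneg hs hroot]

lemma emdenFowler_damping_pos (hτ : -2 < τ) (hN' : 10 + 4 * τ < N') (hp : Pplus N' τ ≤ p) :
    0 < N' - 2 - 2 * ((2 + τ) / (p - 1)) := by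
  have hp1 : 0 < p - 1 := sub_pos.2 (one_lt_of_Pplus_le hτ hN' hp)
  have h := two_mul_lt_mul_sub_one_of_Pplus_le hτ hN' hp
  rw [mul_div_assoc', sub_pos, div_lt_iff₀ hp1]
  linarith

lemma emdenFowler_discrim_nonneg (hτ : -2 < τ) (hN' : 10 + 4 * τ < N') (hp : Pplus N' τ ≤ p) :
    4 * ((p - 1) * ((2 + τ) / (p - 1) * (N' - 2 - (2 + τ) / (p - 1))))
      ≤ (N' - 2 - 2 * ((2 + τ) / (p - 1))) ^ 2 := by
  have hp1 : 0 < p - 1 := sub_pos.2 (one_lt_of_Pplus_le hτ hN' hp)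
  have hQ := quadratic_nonneg_of_Pplus_le hτ hN' hp
  set α := (2 + τ) / (p - 1)
  have hτα : τ = α * (p - 1) - 2 := by simp only [α]; field_simp; ring
  have key : (N' - 2) * (N' - 10 - 4 * τ) * (p - 1) ^ 2 - 4 * (2 + τ) * (N' - 4 - τ) * (p - 1)
      + 4 * (2 + τ) ^ 2
      = ((N' - 2 - 2 * α) ^ 2 - 4 * ((p - 1) * (α * (N' - 2 - α)))) * (p - 1) ^ 2 := by
    rw [hτα]
    ring
  rw [key] at hQ
  exact sub_nonneg.1 (nonneg_of_mul_nonneg_left hQ (pow_pos hp1 2))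

end Pplus

section EmdenFowlerSystem

variable {x x' : ℝ → ℝ} {β A p C γ δ : ℝ}

lemma antitone_lyapunov (hp : 1 ≤ p) (hC : 0 < C) (hCA : C ^ (p - 1) = A)
    (hsum : γ + δ = β) (hprod : γ * δ = (p - 1) * A)
    (hx : ∀ t, HasDerivAt x (x' t) t)
    (hx' : ∀ t, HasDerivAt x' (-β * x' t + A * x t - x t ^ p) t) (hpos : ∀ t, 0 < x t) :
    Antitone fun t => rexp (δ * t) * (x' t + γ * (x t - C)) := by
  refine antitone_of_hasDerivAt_nonpos
    (f' := fun t => rexp (δ * t) * (A * (p * x t - (p - 1) * C) - x t ^ p)) (fun t => ?_)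
    (fun t => ?_)
  · refine ((((hasDerivAt_id' t).const_mul δ).exp).mul
      ((hx' t).add (((hx t).sub_const C).const_mul γ))).congr_deriv ?_
    simp only [Pi.add_apply]
    linear_combination rexp (δ * t) * (x' t * hsum + (x t - C) * hprod)
  · have := rpow_sub_one_mul_le_rpow hC (hpos t).le hp
    rw [hCA] at this
    exact mul_nonpos_of_nonneg_of_nonpos (exp_pos _).le (by linarith)

lemma lyapunov_nonpos (hp : 1 ≤ p) (hC : 0 < C) (hCA : C ^ (p - 1) = A) (hδ : 0 < δ)
    (hsum : γ + δ = β) (hprod : γ * δ = (p - 1) * A)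
    (hx : ∀ t, HasDerivAt x (x' t) t)
    (hx' : ∀ t, HasDerivAt x' (-β * x' t + A * x t - x t ^ p) t) (hpos : ∀ t, 0 < x t)
    (hlim : Tendsto x atBot (𝓝 0)) {c : ℝ} (hslope : ∀ t, x' t ≤ c * x t) (t : ℝ) :
    x' t + γ * (x t - C) ≤ 0 := by
  have hbound : Tendsto (fun s => rexp (δ * s) * ((c + γ) * x s - γ * C)) atBot (𝓝 0) := by
    have hexp : Tendsto (fun s => rexp (δ * s)) atBot (𝓝 0) :=
      tendsto_exp_atBot.comp (tendsto_id.const_mul_atBot hδ)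
    simpa using hexp.mul ((hlim.const_mul (c + γ)).sub_const (γ * C))
  have h := (antitone_lyapunov hp hC hCA hsum hprod hx hx' hpos).ge_of_eventually_le_of_tendsto
    (Eventually.of_forall fun s => mul_le_mul_of_nonneg_left (by linarith [hslope s])
      (exp_pos _).le) hbound t
  exact nonpos_of_mul_nonpos_right h (exp_pos _)

theorem lt_rpow_of_emdenFowler (hp : 1 < p) (hβ : 0 < β) (hA : 0 < A)
    (hdisc : 4 * ((p - 1) * A) ≤ β ^ 2) (hx : ∀ t, HasDerivAt x (x' t) t)
    (hx' : ∀ t, HasDerivAt x' (-β * x' t + A * x t - x t ^ p) t) (hpos : ∀ t, 0 < x t)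
    (hlim : Tendsto x atBot (𝓝 0)) {c : ℝ} (hslope : ∀ t, x' t ≤ c * x t) (t : ℝ) :
    x t < A ^ (1 / (p - 1)) := by
  set C := A ^ (1 / (p - 1))
  have hC : 0 < C := by positivity
  have hCA : C ^ (p - 1) = A := by
    simp only [C, one_div]
    exact rpow_inv_rpow hA.le (by linarith)
  obtain ⟨γ, δ, hγ, hδ, hsum, hprod⟩ :=
    exists_pos_add_eq_mul_eq hβ (mul_pos (by linarith) hA) hdisc
  have hΨ := lyapunov_nonpos hp.le hC hCA hδ hsum hprod hx hx' hpos hlim hslope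
  have hanti : Antitone fun s => rexp (γ * s) * (x s - C) := by
    refine antitone_of_hasDerivAt_nonpos (f' := fun s => rexp (γ * s) * (x' s + γ * (x s - C)))
      (fun s => ((((hasDerivAt_id' s).const_mul γ).exp).mul ((hx s).sub_const C)).congr_deriv
        (by ring)) fun s => mul_nonpos_of_nonneg_of_nonpos (exp_pos _).le (hΨ s)
  have hneg : ∀ᶠ s in atBot, rexp (γ * s) * (x s - C) < 0 :=
    (hlim.eventually (gt_mem_nhds hC)).mono fun s hs => mul_neg_of_pos_of_neg (exp_pos _)
      (by linarith)
  exact sub_neg.1 (neg_of_mul_neg_right (hanti.lt_of_eventually_lt_atBot hneg t) (exp_pos _).le)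

end EmdenFowlerSystem

def emdenFowler (α : ℝ) (v : ℝ → ℝ) (t : ℝ) : ℝ := rexp (α * t) * v (rexp t)

section EmdenFowlerTransform

variable {α : ℝ} {v v' : ℝ → ℝ}

lemma emdenFowler_rpow_mul (α c : ℝ) (v : ℝ → ℝ) (t : ℝ) :
    emdenFowler α (fun s => s ^ c * v s) t = emdenFowler (α + c) v t := by
  simp only [emdenFowler, ← exp_mul, add_mul, exp_add]
  ring_nf

lemma emdenFowler_rpow (α p : ℝ) (v : ℝ → ℝ) (t : ℝ) (hv : 0 ≤ v (rexp t)) :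
    emdenFowler (α * p) (fun s => v s ^ p) t = emdenFowler α v t ^ p := by
  simp only [emdenFowler, mul_rpow (exp_pos _).le hv, ← exp_mul]
  ring_nf

lemma hasDerivAt_emdenFowler {t : ℝ} (hv : HasDerivAt v (v' (rexp t)) (rexp t)) :
    HasDerivAt (emdenFowler α v) (α * emdenFowler α v t + emdenFowler (α + 1) v' t) t := by
  refine ((((hasDerivAt_id' t).const_mul α).exp).mul (hv.comp t (hasDerivAt_exp t))).congr_deriv ?_
  simp only [emdenFowler, Function.comp_apply, add_mul, one_mul, exp_add]
  ring

lemma tendsto_emdenFowler_atBot (hα : 0 < α) (hv : ContinuousWithinAt v (Ici 0) 0) :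
    Tendsto (emdenFowler α v) atBot (𝓝 0) := by
  have hexp : Tendsto (fun t => rexp (α * t)) atBot (𝓝 0) :=
    tendsto_exp_atBot.comp (tendsto_id.const_mul_atBot hα)
  have hv0 : Tendsto (fun t => v (rexp t)) atBot (𝓝 (v 0)) :=
    hv.tendsto.comp (tendsto_exp_atBot_nhdsGT.mono_right (nhdsWithin_mono _ Ioi_subset_Ici_self))
  rw [← zero_mul (v 0)]
  exact hexp.mul hv0

lemma hasDerivAt_emdenFowler_deriv {n τ p : ℝ} (hα : α * (p - 1) = 2 + τ)
    (hv : ∀ r > 0, HasDerivAt v (v' r) r)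
    (hflux : ∀ r > 0, HasDerivAt (fun s => s ^ (n - 1) * v' s) (-(r ^ (n - 1 + τ) * v r ^ p)) r)
    (hpos : ∀ r > 0, 0 < v r) (t : ℝ) :
    HasDerivAt (fun t => α * emdenFowler α v t + emdenFowler (α + 1) v' t)
      (-(n - 2 - 2 * α) * (α * emdenFowler α v t + emdenFowler (α + 1) v' t)
        + α * (n - 2 - α) * emdenFowler α v t - emdenFowler α v t ^ p) t := by
  have hflux' : ∀ t, emdenFowler (α + 1) v' t
      = emdenFowler (α + 2 - n) (fun s => s ^ (n - 1) * v' s) t := by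
    intro t
    rw [emdenFowler_rpow_mul]
    ring_nf
  have hsource : emdenFowler (α + 2 - n + 1) (fun r => -(r ^ (n - 1 + τ) * v r ^ p)) t
      = -emdenFowler α v t ^ p := by
    have h := emdenFowler_rpow_mul (α + 2 - n + 1) (n - 1 + τ) (fun r => v r ^ p) t
    rw [show α + 2 - n + 1 + (n - 1 + τ) = α * p by linear_combination -hα,
      emdenFowler_rpow α p v t (hpos _ (exp_pos t)).le] at h
    rw [← h]
    simp only [emdenFowler]
    ring
  simp only [hflux']
  refine ((hasDerivAt_emdenFowler (hv _ (exp_pos t))).const_mul α |>.add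
    (hasDerivAt_emdenFowler (v' := fun r => -(r ^ (n - 1 + τ) * v r ^ p))
      (hflux _ (exp_pos t)))).congr_deriv ?_
  rw [hsource, ← hflux']
  ring

end EmdenFowlerTransform

lemma IsRadSol.exists_deriv_nonpos {N : ℕ} {θ l p κ : ℝ} {v : ℝ → ℝ}
    (hv : IsRadSol N θ l p κ v) {N' τ : ℝ} (hN' : N' = N + θ) (hτ : τ = l - θ) :
    ∃ v' : ℝ → ℝ, (∀ r > 0, HasDerivAt v (v' r) r) ∧
      (∀ r > 0, HasDerivAt (fun s => s ^ (N' - 1) * v' s) (-(r ^ (N' - 1 + τ) * v r ^ p)) r) ∧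
      ∀ r > 0, v' r ≤ 0 := by
  obtain ⟨-, -, hpos, v', hv', hflux, hlim⟩ := hv
  rw [show (N : ℝ) - 1 + θ = N' - 1 by rw [hN']; ring] at hflux hlim
  rw [show (N : ℝ) - 1 + l = N' - 1 + τ by rw [hN', hτ]; ring] at hflux
  refine ⟨v', hv', hflux, fun r hr => ?_⟩
  have hanti : AntitoneOn (fun s => s ^ (N' - 1) * v' s) (Ioi 0) :=
    antitoneOn_of_hasDerivWithinAt_nonpos (convex_Ioi 0)
      (fun s hs => (hflux s hs).continuousAt.continuousWithinAt)
      (fun s hs => (hflux s (interior_subset hs)).hasDerivWithinAt)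
      (fun s hs => neg_nonpos.2 (mul_nonneg (rpow_pos_of_pos (interior_subset hs) _).le
        (rpow_pos_of_pos (hpos s (interior_subset hs)) p).le))
  exact nonpos_of_mul_nonpos_right (hanti.ge_of_tendsto_nhdsGT hlim hr) (rpow_pos_of_pos hr _)

theorem stmt_12_general {N : ℕ} (θ l p : ℝ)
    (N' τ : ℝ) (hN'def : N' = (N : ℝ) + θ) (hτdef : τ = l - θ)
    (hτ : -2 < τ)
    (hpc : pc N' τ ≤ (p : EReal))
    (κ : ℝ)
    (v : ℝ → ℝ) (hv : IsRadSol N θ l p κ v) :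
    ∀ r : ℝ, 0 < r →
      v r < ((2 + τ) / (p - 1) * (N' - 2 - (2 + τ) / (p - 1))) ^ (1 / (p - 1))
              * r ^ (-(2 + τ) / (p - 1)) := by
  obtain ⟨hbig, hP⟩ := pc_le_coe_iff.1 hpc
  have hp := one_lt_of_Pplus_le hτ hbig hP
  have hβ := emdenFowler_damping_pos hτ hbig hP
  set α := (2 + τ) / (p - 1)
  have hα : 0 < α := div_pos (by linarith) (by linarith)
  have hαp : α * (p - 1) = 2 + τ := div_mul_cancel₀ _ (by linarith)
  obtain ⟨v', hv', hflux, hv'_nonpos⟩ := hv.exists_deriv_nonpos hN'def hτdef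
  have hpos : ∀ r > 0, 0 < v r := hv.2.2.1
  intro r hr
  have hlt := lt_rpow_of_emdenFowler hp hβ (mul_pos hα (by linarith))
    (emdenFowler_discrim_nonneg hτ hbig hP) (fun t => hasDerivAt_emdenFowler (hv' _ (exp_pos t)))
    (hasDerivAt_emdenFowler_deriv hαp hv' hflux hpos)
    (fun t => mul_pos (exp_pos _) (hpos _ (exp_pos t)))
    (tendsto_emdenFowler_atBot hα (hv.1 0 self_mem_Ici))
    (fun t => add_le_of_nonpos_right
      (mul_nonpos_of_nonneg_of_nonpos (exp_pos _).le (hv'_nonpos _ (exp_pos t)))) (log r)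
  rw [emdenFowler, exp_log hr, mul_comm α, ← rpow_def_of_pos hr] at hlt
  calc v r = r ^ α * v r * r ^ (-α) := by
        rw [mul_comm, ← mul_assoc, ← rpow_add hr, neg_add_cancel, rpow_zero, one_mul]
    _ < _ := by rw [neg_div]; exact mul_lt_mul_of_pos_right hlt (rpow_pos_of_pos hr _)

/-- Lemma 3.1(ii): the radial solutions lie below the singular
solution. With `N' = N + θ > 2`, `τ = l - θ > -2` and `p ≥ p_c(N',τ)`, every
positive solution `v_κ` (`κ > 0`) of the radial initial value problem satisfies
`v_κ(r) < C₀ r^{-(2+τ)/(p-1)}` for all `r > 0`, where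
`C₀ = [((2+τ)/(p-1))(N'-2-(2+τ)/(p-1))]^{1/(p-1)}`. -/
theorem stmt_12 {N : ℕ} (hN : 2 ≤ N) (θ l p : ℝ)
    (N' τ : ℝ) (hN'def : N' = (N : ℝ) + θ) (hτdef : τ = l - θ)
    (hN' : 2 < N') (hτ : -2 < τ)
    (hpc : pc N' τ ≤ (p : EReal))
    (κ : ℝ) (hκ : 0 < κ)
    (v : ℝ → ℝ) (hv : IsRadSol N θ l p κ v) :
    ∀ r : ℝ, 0 < r →
      v r < ((2 + τ) / (p - 1) * (N' - 2 - (2 + τ) / (p - 1))) ^ (1 / (p - 1))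
              * r ^ (-(2 + τ) / (p - 1)) :=
  stmt_12_general θ l p N' τ hN'def hτdef hτ hpc κ v hv

end
end
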